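/- The invariant density of the weak-effects limit satisfies the zero-flux equation of the limiting Fokker–Planck equation: for real parameters θ₁, θ₂ and N₁, N₂ > 0, and every x ∈ (0, 1), the function x ↦ x(1−x)·w(x) is differentiable at x with derivative equal to ( ((θ₁+θ₂)x − θ₁)·x·(1−x) − (N₁+N₂)x + N₁ )·w(x), where w(x) = exp(½(θ₁+θ₂)x² − θ₁x)·x^{N₁−1}(1−x)^{N₂−1}. -/

import Mathlib

/-- Unnormalized invariant density of the weak-effects limit of the zealot
model with reinforcement. -/
noncomputable def w (θ₁ θ₂ N₁ N₂ x : ℝ) : ℝ :=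
  Real.exp ((1 / 2) * (θ₁ + θ₂) * x ^ 2 - θ₁ * x) * x ^ (N₁ - 1) * (1 - x) ^ (N₂ - 1)

/-!
Multiplying `w` by `x(1 − x)` raises both exponents by one, so on `(0, 1)` the flux
`x(1 − x) w(x)` is the Jacobi-type weight `exp(q(x)) x^N₁ (1 − x)^N₂` with
`q(x) = ½(θ₁+θ₂)x² − θ₁x`. Its derivative, computed by the product rule and factored
back through `w`, is `(q'(x) x(1 − x) + N₁(1 − x) − N₂ x) w(x)`, which is the zero-flux
right-hand side since `q'(x) = (θ₁+θ₂)x − θ₁`.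
-/

open Real Set

lemma Real.rpow_eq_rpow_sub_one_mul {x : ℝ} (hx : x ≠ 0) (a : ℝ) :
    x ^ a = x ^ (a - 1) * x := by
  simpa using rpow_add_one hx (a - 1)

lemma hasDerivAt_one_sub_rpow_const {x : ℝ} (hx : x ≠ 1) (b : ℝ) :
    HasDerivAt (fun y : ℝ => (1 - y) ^ b) (-(b * (1 - x) ^ (b - 1))) x := by
  refine (((hasDerivAt_id' x).const_sub 1).rpow_const
    (Or.inl (sub_ne_zero.2 hx.symm))).congr_deriv ?_
  ring

lemma hasDerivAt_exp_mul_rpow_mul_one_sub_rpow {f : ℝ → ℝ} {f' x : ℝ}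
    (hf : HasDerivAt f f' x) (hx₀ : x ≠ 0) (hx₁ : x ≠ 1) (a b : ℝ) :
    HasDerivAt (fun y => exp (f y) * y ^ a * (1 - y) ^ b)
      ((f' * x * (1 - x) + a * (1 - x) - b * x) *
        (exp (f x) * x ^ (a - 1) * (1 - x) ^ (b - 1))) x := by
  refine ((hf.exp.mul (hasDerivAt_rpow_const (Or.inl hx₀))).mul
    (hasDerivAt_one_sub_rpow_const hx₁ b)).congr_deriv ?_
  simp only [Pi.mul_apply]
  rw [rpow_eq_rpow_sub_one_mul hx₀ a, rpow_eq_rpow_sub_one_mul (sub_ne_zero.2 hx₁.symm) b]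
  ring

lemma mul_one_sub_mul_w_eq {y : ℝ} (hy : y ∈ Ioo (0 : ℝ) 1) (θ₁ θ₂ N₁ N₂ : ℝ) :
    y * (1 - y) * w θ₁ θ₂ N₁ N₂ y =
      exp ((1 / 2) * (θ₁ + θ₂) * y ^ 2 - θ₁ * y) * y ^ N₁ * (1 - y) ^ N₂ := by
  rw [w, rpow_eq_rpow_sub_one_mul hy.1.ne' N₁,
    rpow_eq_rpow_sub_one_mul (sub_ne_zero.2 hy.2.ne') N₂]
  ring

theorem invariant_density_zero_flux_general (θ₁ θ₂ N₁ N₂ : ℝ)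
    (x : ℝ) (hx : x ∈ Set.Ioo (0 : ℝ) 1) :
    HasDerivAt (fun y : ℝ => y * (1 - y) * w θ₁ θ₂ N₁ N₂ y)
      ((((θ₁ + θ₂) * x - θ₁) * x * (1 - x) - (N₁ + N₂) * x + N₁) * w θ₁ θ₂ N₁ N₂ x)
      x := by
  have hq : HasDerivAt (fun y : ℝ => (1 / 2) * (θ₁ + θ₂) * y ^ 2 - θ₁ * y)
      ((θ₁ + θ₂) * x - θ₁) x := by
    refine (((hasDerivAt_pow 2 x).const_mul _).sub
      ((hasDerivAt_id x).const_mul θ₁)).congr_deriv ?_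
    simp only [Nat.cast_ofNat]
    ring
  have hflux : (fun y => y * (1 - y) * w θ₁ θ₂ N₁ N₂ y) =ᶠ[nhds x]
      fun y => exp ((1 / 2) * (θ₁ + θ₂) * y ^ 2 - θ₁ * y) * y ^ N₁ * (1 - y) ^ N₂ :=
    Filter.eventually_of_mem (isOpen_Ioo.mem_nhds hx) fun y hy =>
      mul_one_sub_mul_w_eq hy _ _ _ _
  refine ((hasDerivAt_exp_mul_rpow_mul_one_sub_rpow hq hx.1.ne' hx.2.ne N₁ N₂)
    |>.congr_of_eventuallyEq hflux).congr_deriv ?_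
  rw [w]
  ring

/-- The invariant density satisfies the zero-flux equation of the limiting
Fokker–Planck equation: for every `x ∈ (0,1)`, the function
`x ↦ x(1−x)w(x)` is differentiable at `x` with derivative
`(((θ₁+θ₂)x − θ₁)x(1−x) − (N₁+N₂)x + N₁)·w(x)`. -/
theorem invariant_density_zero_flux (θ₁ θ₂ N₁ N₂ : ℝ) (hN₁ : 0 < N₁) (hN₂ : 0 < N₂)
    (x : ℝ) (hx : x ∈ Set.Ioo (0 : ℝ) 1) :
    HasDerivAt (fun y : ℝ => y * (1 - y) * w θ₁ θ₂ N₁ N₂ y)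
      ((((θ₁ + θ₂) * x - θ₁) * x * (1 - x) - (N₁ + N₂) * x + N₁) * w θ₁ θ₂ N₁ N₂ x)
      x :=
  invariant_density_zero_flux_general θ₁ θ₂ N₁ N₂ x hx
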